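/- arXiv:2603.14263 — 2 statements merged into one kernel-verified Lean document; each statement's English description precedes it below -/
import Mathlib

section
/- Assume the centered scatter matrix S(A) = A Q_m Aᵀ is positive definite. Then the polyhedral localization set 𝒳_d is a bounded subset of ℝⁿ. -/
open Matrix
open scoped InnerProductSpace

noncomputable section

/-- Reinterpret a plain vector as a point of Euclidean space (with the ℓ² norm). -/
def toE {n : ℕ} (v : Fin n → ℝ) : EuclideanSpace ℝ (Fin n) := WithLp.toLp 2 v

/-- The all-ones m×m matrix 𝟙𝟙ᵀ. -/
def onesM (m : ℕ) : Matrix (Fin m) (Fin m) ℝ := Matrix.of fun _ _ => 1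

/-- The centering projector Q_m = I_m − (1/m)𝟙𝟙ᵀ. -/
def Qm (m : ℕ) : Matrix (Fin m) (Fin m) ℝ := 1 - (m : ℝ)⁻¹ • onesM m

/-- The i-th anchor a⁽ⁱ⁾, i.e. the i-th column of A, as a Euclidean point. -/
def colE {n m : ℕ} (A : Matrix (Fin n) (Fin m) ℝ) (i : Fin m) : EuclideanSpace ℝ (Fin n) :=
  toE fun k => A k i

/-- The vector ω ∈ ℝᵐ with entries ωᵢ = ‖a⁽ⁱ⁾‖₂². -/
def omegaV {n m : ℕ} (A : Matrix (Fin n) (Fin m) ℝ) : Fin m → ℝ := fun i => ‖colE A i‖ ^ 2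

/-- The polyhedral localization set
𝒳_d = {x : ∃ α, ξ⁻ ≤ Q_m ω − 2 Q_m Aᵀ x + α𝟙 ≤ ξ⁺}. -/
def Xd {n m : ℕ} (A : Matrix (Fin n) (Fin m) ℝ) (xim xip : Fin m → ℝ) :
    Set (EuclideanSpace ℝ (Fin n)) :=
  {x | ∃ α : ℝ,
      xim ≤ (Qm m).mulVec (omegaV A) - (2 : ℝ) • ((Qm m * Aᵀ).mulVec x) + α • (1 : Fin m → ℝ) ∧
      (Qm m).mulVec (omegaV A) - (2 : ℝ) • ((Qm m * Aᵀ).mulVec x) + α • (1 : Fin m → ℝ) ≤ xip}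

/-- The intersection ℋ of the upper-range balls: ℋ = ∩ᵢ {x : ‖x − a⁽ⁱ⁾‖₂ ≤ √ξᵢ⁺}. -/
def Hset {n m : ℕ} (A : Matrix (Fin n) (Fin m) ℝ) (xip : Fin m → ℝ) :
    Set (EuclideanSpace ℝ (Fin n)) :=
  {x | ∀ i, ‖x - colE A i‖ ≤ Real.sqrt (xip i)}

/-- Support function h_Ω(v) = sup_{x∈Ω} vᵀx. -/
def suppF {n : ℕ} (Ω : Set (EuclideanSpace ℝ (Fin n))) (v : EuclideanSpace ℝ (Fin n)) : ℝ :=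
  sSup ((fun x => ⟪v, x⟫_ℝ) '' Ω)

/-- ψ_Ω(v) = h_Ω(v) + h_Ω(−v). -/
def psiH {n : ℕ} (Ω : Set (EuclideanSpace ℝ (Fin n))) (v : EuclideanSpace ℝ (Fin n)) : ℝ :=
  suppF Ω v + suppF Ω (-v)

/-- Directional width width_v(Ω) = sup_{x∈Ω} vᵀx − inf_{x∈Ω} vᵀx. -/
def dwidth {n : ℕ} (v : EuclideanSpace ℝ (Fin n)) (Ω : Set (EuclideanSpace ℝ (Fin n))) : ℝ :=
  sSup ((fun x => ⟪v, x⟫_ℝ) '' Ω) - sInf ((fun x => ⟪v, x⟫_ℝ) '' Ω)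

/-- The aggregated squared radius ρ(p)² = pᵀ(ξ⁺ − ω) + ‖Ap‖₂². -/
def rho2 {n m : ℕ} (A : Matrix (Fin n) (Fin m) ℝ) (xip : Fin m → ℝ) (p : Fin m → ℝ) : ℝ :=
  p ⬝ᵥ (xip - omegaV A) + ‖toE (A.mulVec p)‖ ^ 2
/-
Applying A Q_m to Q_m ω − 2 Q_m Aᵀ x + α𝟙 kills the α𝟙 term (Q_m 𝟙 = 0) and, Q_m being
idempotent, leaves A Q_m ω − 2 S(A) x. So S(A) x is an affine function of a point of the box
[ξ⁻, ξ⁺]; as S(A) is invertible, 𝒳_d lies in a continuous image of that compact box.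
-/

lemma Qm_mul_self (m : ℕ) : Qm m * Qm m = Qm m := by
  rcases eq_or_ne m 0 with rfl | hm
  · exact Subsingleton.elim _ _
  have hJ : onesM m * onesM m = (m : ℝ) • onesM m := by
    ext i j
    simp [onesM, Matrix.mul_apply]
  have hm' : (m : ℝ) ≠ 0 := Nat.cast_ne_zero.2 hm
  simp only [Qm, sub_mul, mul_sub, one_mul, mul_one, Matrix.smul_mul, Matrix.mul_smul, hJ,
    smul_smul, inv_mul_cancel₀ hm']
  abel

lemma Qm_mulVec_one (m : ℕ) : Qm m *ᵥ (1 : Fin m → ℝ) = 0 := by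
  rw [Qm, Matrix.sub_mulVec, Matrix.one_mulVec, Matrix.smul_mulVec]
  funext i
  have hm : (m : ℝ) ≠ 0 := Nat.cast_ne_zero.2 i.pos.ne'
  simp [onesM, Matrix.mulVec, dotProduct, hm]

lemma scatter_mulVec_eq {n m : ℕ} (A : Matrix (Fin n) (Fin m) ℝ) (x : Fin n → ℝ) (α : ℝ) :
    (A * Qm m * Aᵀ) *ᵥ x = (2 : ℝ)⁻¹ • ((A * Qm m) *ᵥ
      (omegaV A - (Qm m *ᵥ omegaV A - (2 : ℝ) • ((Qm m * Aᵀ) *ᵥ x) + α • 1))) := by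
  have hAQQ : A * Qm m * Qm m = A * Qm m := by rw [Matrix.mul_assoc, Qm_mul_self]
  have hAQ1 : (A * Qm m) *ᵥ (1 : Fin m → ℝ) = 0 := by
    rw [← Matrix.mulVec_mulVec, Qm_mulVec_one, Matrix.mulVec_zero]
  simp only [Matrix.mulVec_sub, Matrix.mulVec_add, Matrix.mulVec_smul, Matrix.mulVec_mulVec,
    hAQ1, ← Matrix.mul_assoc, hAQQ]
  module

lemma Xd_subset_image_Icc {n m : ℕ} (A : Matrix (Fin n) (Fin m) ℝ) (xim xip : Fin m → ℝ)
    (hS : IsUnit (A * Qm m * Aᵀ).det) :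
    Xd A xim xip ⊆ (fun v => toE ((A * Qm m * Aᵀ)⁻¹ *ᵥ ((2 : ℝ)⁻¹ • ((A * Qm m) *ᵥ
      (omegaV A - v))))) '' Set.Icc xim xip := by
  rintro x ⟨α, hlo, hhi⟩
  refine ⟨_, ⟨hlo, hhi⟩, ?_⟩
  dsimp only
  rw [← scatter_mulVec_eq, Matrix.mulVec_mulVec, Matrix.nonsing_inv_mul _ hS, Matrix.one_mulVec]
  rfl

/-- If S(A) = A Q_m Aᵀ ≻ 0, then the polyhedral localization set 𝒳_d is a
bounded subset of ℝⁿ. -/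
theorem stmt5 {n m : ℕ} (A : Matrix (Fin n) (Fin m) ℝ) (xim xip : Fin m → ℝ)
    (hpd : (A * Qm m * Aᵀ).PosDef) :
    Bornology.IsBounded (Xd A xim xip) := by
  have hS : IsUnit (A * Qm m * Aᵀ).det := (Matrix.isUnit_iff_isUnit_det _).1 hpd.isUnit
  refine (isCompact_Icc.image ?_).isBounded.subset (Xd_subset_image_Icc A xim xip hS)
  unfold toE
  fun_prop
end
end

section
/- Assume ℋ = ∩ᵢ {x ∈ ℝⁿ : ‖x − a⁽ⁱ⁾‖₂ ≤ √(ξᵢ⁺)} has nonempty interior, i.e., there exists x₀ with ‖x₀ − a⁽ⁱ⁾‖₂² < ξᵢ⁺ for all i. Then for every v ∈ ℝⁿ, the support function h_ℋ(v) = sup over x ∈ ℋ of vᵀx satisfies the exact formula h_ℋ(v) = min over p in the probability simplex Δ_m of (vᵀ(Ap) + ‖v‖₂ ρ(p)), where ρ(p)² = pᵀ(ξ⁺ − ω) + ‖Ap‖₂². -/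
open Matrix
open scoped InnerProductSpace

noncomputable section

/-!
For weights `p` in the simplex with centre `c(p) = ∑ pᵢ aᵢ`, the identity
`∑ pᵢ (ξᵢ - ‖x - aᵢ‖²) = ρ(p)² - ‖x - c(p)‖²` shows that `ℋ = {x | ∀ i, ‖x - aᵢ‖² ≤ ξᵢ}` lies in
the ball of centre `c(p)` and radius `ρ(p)`, so `⟪v, x⟫ ≤ ⟪v, c(p)⟫ + ‖v‖ ρ(p)` on `ℋ`.
Conversely, let `p` minimize the right-hand side over the compact simplex and let
`x* = c(p) + (ρ(p) / ‖v‖) v` be the maximizer of `⟪v, ·⟫` on that ball. Comparing `p` with the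
weights `(1 - t) p + t eᵢ` and letting `t → 0⁺` gives `‖x* - aᵢ‖² ≤ ξᵢ`, so `x* ∈ ℋ` attains the
bound. The Slater point keeps `ρ` positive on the simplex.
-/

open Finset Filter Topology

namespace BallIntersection

variable {E ι : Type*} [NormedAddCommGroup E] [InnerProductSpace ℝ E] [Fintype ι]
  (a : ι → E) (ξ : ι → ℝ)

def radiusSq (p : ι → ℝ) : ℝ := ∑ i, p i * (ξ i - ‖a i‖ ^ 2) + ‖∑ i, p i • a i‖ ^ 2

def supportBound (v : E) (p : ι → ℝ) : ℝ :=
  ⟪v, ∑ i, p i • a i⟫_ℝ + ‖v‖ * √(radiusSq a ξ p)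

theorem sum_mul_sub_norm_sub_sq {p : ι → ℝ} (hp : ∑ i, p i = 1) (x : E) :
    ∑ i, p i * (ξ i - ‖x - a i‖ ^ 2) = radiusSq a ξ p - ‖x - ∑ i, p i • a i‖ ^ 2 := by
  have h (i : ι) : p i * (ξ i - ‖x - a i‖ ^ 2)
      = p i * (ξ i - ‖a i‖ ^ 2) - p i * ‖x‖ ^ 2 + 2 * ⟪x, p i • a i⟫_ℝ := by
    rw [norm_sub_sq_real, real_inner_smul_right]; ring
  simp only [h, sum_add_distrib, sum_sub_distrib, ← sum_mul, hp, ← mul_sum, ← inner_sum]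
  rw [radiusSq, norm_sub_sq_real]; ring

theorem norm_sub_sum_smul_sq_le_radiusSq {p : ι → ℝ} (hp : p ∈ stdSimplex ℝ ι) {x : E}
    (hx : ∀ i, ‖x - a i‖ ^ 2 ≤ ξ i) : ‖x - ∑ i, p i • a i‖ ^ 2 ≤ radiusSq a ξ p := by
  have hslack : 0 ≤ ∑ i, p i * (ξ i - ‖x - a i‖ ^ 2) :=
    sum_nonneg fun i _ => mul_nonneg (hp.1 i) (sub_nonneg.2 (hx i))
  linarith [sum_mul_sub_norm_sub_sq a ξ hp.2 x]

theorem radiusSq_pos {p : ι → ℝ} (hp : p ∈ stdSimplex ℝ ι) {x₀ : E}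
    (hx₀ : ∀ i, ‖x₀ - a i‖ ^ 2 < ξ i) : 0 < radiusSq a ξ p := by
  obtain ⟨j, -, hj⟩ : ∃ j ∈ univ, (0 : ι → ℝ) j < p j :=
    exists_lt_of_sum_lt (by simp [hp.2])
  have hslack : 0 < ∑ i, p i * (ξ i - ‖x₀ - a i‖ ^ 2) :=
    sum_pos' (fun i _ => mul_nonneg (hp.1 i) (sub_nonneg.2 (hx₀ i).le))
      ⟨j, mem_univ j, mul_pos hj (sub_pos.2 (hx₀ j))⟩
  linarith [sum_mul_sub_norm_sub_sq a ξ hp.2 x₀, sq_nonneg ‖x₀ - ∑ i, p i • a i‖]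

theorem inner_le_supportBound {p : ι → ℝ} (hp : p ∈ stdSimplex ℝ ι) {x : E}
    (hx : ∀ i, ‖x - a i‖ ^ 2 ≤ ξ i) (v : E) : ⟪v, x⟫_ℝ ≤ supportBound a ξ v p := by
  set c := ∑ i, p i • a i
  have hdist : ‖x - c‖ ≤ √(radiusSq a ξ p) :=
    Real.le_sqrt_of_sq_le (norm_sub_sum_smul_sq_le_radiusSq a ξ hp hx)
  calc ⟪v, x⟫_ℝ = ⟪v, c⟫_ℝ + ⟪v, x - c⟫_ℝ := by rw [inner_sub_right]; ring
    _ ≤ ⟪v, c⟫_ℝ + ‖v‖ * ‖x - c‖ := by gcongr; exact real_inner_le_norm v _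
    _ ≤ supportBound a ξ v p := by unfold supportBound; gcongr

theorem continuous_supportBound (v : E) : Continuous (supportBound a ξ v) := by
  unfold supportBound radiusSq; fun_prop

theorem sum_segment_single_smul {M : Type*} [AddCommGroup M] [Module ℝ M] [DecidableEq ι]
    (p : ι → ℝ) (f : ι → M) (i : ι) (t : ℝ) :
    ∑ j, ((1 - t) • p + t • Pi.single i 1 : ι → ℝ) j • f j
      = (1 - t) • ∑ j, p j • f j + t • f i := by
  simp [add_smul, mul_smul, sum_add_distrib, smul_sum, Pi.single_apply]

theorem radiusSq_segment_single [DecidableEq ι] {p : ι → ℝ} (hp : ∑ j, p j = 1) (x : E)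
    (i : ι) (t : ℝ) :
    radiusSq a ξ ((1 - t) • p + t • Pi.single i 1)
      = (1 - t) * (radiusSq a ξ p - ‖x - ∑ j, p j • a j‖ ^ 2) + t * (ξ i - ‖x - a i‖ ^ 2)
        + ‖x - ((1 - t) • ∑ j, p j • a j + t • a i)‖ ^ 2 := by
  have hq : ∑ j, ((1 - t) • p + t • Pi.single i 1 : ι → ℝ) j = 1 := by
    simpa [hp] using sum_segment_single_smul p (fun _ => (1 : ℝ)) i t
  have hslack := sum_segment_single_smul p (fun j => ξ j - ‖x - a j‖ ^ 2) i t
  simp only [smul_eq_mul, sum_mul_sub_norm_sub_sq a ξ hq, sum_mul_sub_norm_sub_sq a ξ hp,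
    sum_segment_single_smul] at hslack
  linarith

theorem norm_sq_mul_norm_smul_add_sq_sub_inner_sq (v u : E) (α t : ℝ) :
    ‖v‖ ^ 2 * ‖α • v + t • u‖ ^ 2 - ⟪v, α • v + t • u⟫_ℝ ^ 2
      = t ^ 2 * (‖v‖ ^ 2 * ‖u‖ ^ 2 - ⟪v, u⟫_ℝ ^ 2) := by
  rw [norm_add_sq_real, inner_add_right, real_inner_smul_right, real_inner_smul_right,
    real_inner_smul_left, real_inner_smul_right, norm_smul, norm_smul, real_inner_self_eq_norm_sq,
    Real.norm_eq_abs, Real.norm_eq_abs, mul_pow, mul_pow, sq_abs, sq_abs]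
  ring

def optimalPoint (v : E) (p : ι → ℝ) : E :=
  ∑ j, p j • a j + (√(radiusSq a ξ p) / ‖v‖) • v

variable {a ξ}

theorem norm_optimalPoint_sub_sq {v : E} (hv : v ≠ 0) {p : ι → ℝ} (hp : 0 ≤ radiusSq a ξ p) :
    ‖optimalPoint a ξ v p - ∑ j, p j • a j‖ ^ 2 = radiusSq a ξ p := by
  have hV : 0 < ‖v‖ := norm_pos_iff.2 hv
  rw [optimalPoint, add_sub_cancel_left, norm_smul, Real.norm_eq_abs,
    abs_of_nonneg (by positivity), div_mul_cancel₀ _ hV.ne', Real.sq_sqrt hp]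

theorem inner_optimalPoint {v : E} (hv : v ≠ 0) (p : ι → ℝ) :
    ⟪v, optimalPoint a ξ v p⟫_ℝ = supportBound a ξ v p := by
  have hV : ‖v‖ ≠ 0 := norm_ne_zero_iff.2 hv
  rw [optimalPoint, supportBound, inner_add_right, real_inner_smul_right,
    real_inner_self_eq_norm_sq]
  field_simp

/-- Minimality of `p` against `(1 - t) p + t eᵢ`, squared: since `x* - c((1 - t) p + t eᵢ)` is
`(ρ / ‖v‖) v + t (c(p) - aᵢ)`, the identity `norm_sq_mul_norm_smul_add_sq_sub_inner_sq` leaves a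
common factor `t`. -/
theorem slack_add_nonneg_of_isMinOn {v : E} (hv : v ≠ 0)
    (hpos : ∀ q ∈ stdSimplex ℝ ι, 0 < radiusSq a ξ q) {p : ι → ℝ} (hp : p ∈ stdSimplex ℝ ι)
    (hmin : IsMinOn (supportBound a ξ v) (stdSimplex ℝ ι) p) (i : ι) {t : ℝ}
    (ht₀ : 0 < t) (ht₁ : t ≤ 1)
    (hinner : 0 ≤ ‖v‖ * √(radiusSq a ξ p) + t * ⟪v, ∑ j, p j • a j - a i⟫_ℝ) :
    0 ≤ ‖v‖ ^ 2 * (ξ i - ‖optimalPoint a ξ v p - a i‖ ^ 2)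
      + t * (‖v‖ ^ 2 * ‖∑ j, p j • a j - a i‖ ^ 2 - ⟪v, ∑ j, p j • a j - a i⟫_ℝ ^ 2) := by
  classical
  set c := ∑ j, p j • a j
  set x := optimalPoint a ξ v p
  set q : ι → ℝ := (1 - t) • p + t • Pi.single i 1
  set w := (√(radiusSq a ξ p) / ‖v‖) • v + t • (c - a i)
  have hq : q ∈ stdSimplex ℝ ι :=
    convex_stdSimplex ℝ ι hp (single_mem_stdSimplex ℝ i) (by linarith) ht₀.le (by ring)
  have hcq : ∑ j, q j • a j = (1 - t) • c + t • a i := sum_segment_single_smul p a i t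
  have hw : x - ((1 - t) • c + t • a i) = w := by
    simp only [x, w, optimalPoint, c]; module
  have hρq : radiusSq a ξ q = t * (ξ i - ‖x - a i‖ ^ 2) + ‖w‖ ^ 2 := by
    rw [radiusSq_segment_single a ξ hp.2 x, norm_optimalPoint_sub_sq hv (hpos p hp).le, hw]
    ring
  have hvw : ⟪v, w⟫_ℝ ≤ ‖v‖ * √(radiusSq a ξ q) := by
    have := hmin hq
    rw [Set.mem_ofPred_eq, ← inner_optimalPoint hv p, supportBound, hcq] at this
    rw [← hw, inner_sub_right]
    linarith
  have hvw₀ : 0 ≤ ⟪v, w⟫_ℝ := by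
    have hV : ‖v‖ ≠ 0 := norm_ne_zero_iff.2 hv
    convert hinner using 1
    rw [inner_add_right, real_inner_smul_right, real_inner_smul_right,
      real_inner_self_eq_norm_sq]
    field_simp
  have hsq : ⟪v, w⟫_ℝ ^ 2 ≤ ‖v‖ ^ 2 * radiusSq a ξ q := by
    simpa [mul_pow, Real.sq_sqrt (hpos q hq).le] using pow_le_pow_left₀ hvw₀ hvw 2
  have hlagrange := norm_sq_mul_norm_smul_add_sq_sub_inner_sq v (c - a i)
    (√(radiusSq a ξ p) / ‖v‖) t
  refine nonneg_of_mul_nonneg_right ?_ ht₀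
  rw [hρq] at hsq
  linear_combination hsq + hlagrange

theorem norm_optimalPoint_sub_sq_le {v : E} (hv : v ≠ 0)
    (hpos : ∀ q ∈ stdSimplex ℝ ι, 0 < radiusSq a ξ q) {p : ι → ℝ} (hp : p ∈ stdSimplex ℝ ι)
    (hmin : IsMinOn (supportBound a ξ v) (stdSimplex ℝ ι) p) (i : ι) :
    ‖optimalPoint a ξ v p - a i‖ ^ 2 ≤ ξ i := by
  set u := ∑ j, p j • a j - a i
  have hlin (b k : ℝ) : Tendsto (fun t : ℝ => b + t * k) (𝓝[>] 0) (𝓝 b) :=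
    tendsto_nhdsWithin_of_tendsto_nhds
      (by simpa using ((continuous_id.mul continuous_const).const_add b).tendsto (0 : ℝ))
  have hV : 0 < ‖v‖ := norm_pos_iff.2 hv
  have hstart : 0 < ‖v‖ * √(radiusSq a ξ p) := mul_pos hV (Real.sqrt_pos.2 (hpos p hp))
  have hev : ∀ᶠ t in 𝓝[>] 0,
      0 ≤ ‖v‖ ^ 2 * (ξ i - ‖optimalPoint a ξ v p - a i‖ ^ 2)
        + t * (‖v‖ ^ 2 * ‖u‖ ^ 2 - ⟪v, u⟫_ℝ ^ 2) := by
    filter_upwards [(hlin _ ⟪v, u⟫_ℝ).eventually (eventually_ge_nhds hstart),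
      Ioc_mem_nhdsGT one_pos] with t hinner ht
    exact slack_add_nonneg_of_isMinOn hv hpos hp hmin i ht.1 ht.2 hinner
  have := nonneg_of_mul_nonneg_right (ge_of_tendsto (hlin _ _) hev) (by positivity)
  linarith

theorem isLeast_supportBound_image [Nonempty ι] {x₀ : E} (hx₀ : ∀ i, ‖x₀ - a i‖ ^ 2 < ξ i)
    (v : E) :
    IsLeast (supportBound a ξ v '' stdSimplex ℝ ι)
      (sSup ((⟪v, ·⟫_ℝ) '' {x | ∀ i, ‖x - a i‖ ^ 2 ≤ ξ i})) := by
  classical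
  obtain ⟨p, hp, hmin⟩ := (isCompact_stdSimplex ℝ ι).exists_isMinOn
    ⟨_, single_mem_stdSimplex ℝ (Classical.arbitrary ι)⟩
    (continuous_supportBound a ξ v).continuousOn
  have hpos (q : ι → ℝ) (hq : q ∈ stdSimplex ℝ ι) : 0 < radiusSq a ξ q := radiusSq_pos a ξ hq hx₀
  obtain ⟨x, hx, hxv⟩ : ∃ x, (∀ i, ‖x - a i‖ ^ 2 ≤ ξ i) ∧ ⟪v, x⟫_ℝ = supportBound a ξ v p := by
    rcases eq_or_ne v 0 with rfl | hv
    · exact ⟨x₀, fun i => (hx₀ i).le, by simp [supportBound]⟩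
    · exact ⟨_, norm_optimalPoint_sub_sq_le hv hpos hp hmin, inner_optimalPoint hv p⟩
  have hmax : IsGreatest ((⟪v, ·⟫_ℝ) '' {x | ∀ i, ‖x - a i‖ ^ 2 ≤ ξ i}) (supportBound a ξ v p) :=
    ⟨⟨x, hx, hxv⟩, by rintro _ ⟨y, hy, rfl⟩; exact inner_le_supportBound a ξ hp hy v⟩
  rw [hmax.csSup_eq]
  exact ⟨Set.mem_image_of_mem _ hp, by rintro _ ⟨q, hq, rfl⟩; exact hmin hq⟩

end BallIntersection

open BallIntersection

theorem toE_mulVec_eq_sum {n m : ℕ} (A : Matrix (Fin n) (Fin m) ℝ) (p : Fin m → ℝ) :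
    toE (A *ᵥ p) = ∑ i, p i • colE A i := by
  ext k
  simp [toE, colE, mulVec, dotProduct, mul_comm]

theorem rho2_eq_radiusSq {n m : ℕ} (A : Matrix (Fin n) (Fin m) ℝ) (xip p : Fin m → ℝ) :
    rho2 A xip p = radiusSq (colE A) xip p := by
  simp [rho2, radiusSq, toE_mulVec_eq_sum, omegaV, dotProduct]

theorem Hset_eq {n m : ℕ} (A : Matrix (Fin n) (Fin m) ℝ) {xip : Fin m → ℝ}
    (hxip : ∀ i, 0 ≤ xip i) : Hset A xip = {x | ∀ i, ‖x - colE A i‖ ^ 2 ≤ xip i} := by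
  ext x
  simp [Hset, Real.le_sqrt (norm_nonneg _) (hxip _)]

theorem stmt13_general {n m : ℕ} (hm : 0 < m) (A : Matrix (Fin n) (Fin m) ℝ) (xip : Fin m → ℝ)
    (hint : ∃ x₀ : EuclideanSpace ℝ (Fin n), ∀ i, ‖x₀ - colE A i‖ ^ 2 < xip i)
    (v : EuclideanSpace ℝ (Fin n)) :
    IsLeast
      {t | ∃ p ∈ stdSimplex ℝ (Fin m),
        t = ⟪v, toE (A.mulVec p)⟫_ℝ + ‖v‖ * Real.sqrt (rho2 A xip p)}
      (suppF (Hset A xip) v) := by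
  obtain ⟨x₀, hx₀⟩ := hint
  have : Nonempty (Fin m) := ⟨⟨0, hm⟩⟩
  have hxip (i : Fin m) : 0 ≤ xip i := (sq_nonneg _).trans (hx₀ i).le
  convert isLeast_supportBound_image hx₀ v using 1
  · ext t
    simp [supportBound, toE_mulVec_eq_sum, rho2_eq_radiusSq, eq_comm]
  · rw [suppF, Hset_eq A hxip]

/-- If ℋ has nonempty interior (Slater point x₀ with ‖x₀ − a⁽ⁱ⁾‖² < ξᵢ⁺ for all
i), then for every v ∈ ℝⁿ the support function of ℋ satisfies the exact formula
h_ℋ(v) = min_{p ∈ Δ_m} (vᵀ(Ap) + ‖v‖₂ ρ(p)), the minimum being attained. -/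
theorem stmt13 {n m : ℕ} (hm : 0 < m) (A : Matrix (Fin n) (Fin m) ℝ) (xip : Fin m → ℝ)
    (hxip : ∀ i, 0 < xip i)
    (hint : ∃ x₀ : EuclideanSpace ℝ (Fin n), ∀ i, ‖x₀ - colE A i‖ ^ 2 < xip i)
    (v : EuclideanSpace ℝ (Fin n)) :
    IsLeast
      {t | ∃ p ∈ stdSimplex ℝ (Fin m),
        t = ⟪v, toE (A.mulVec p)⟫_ℝ + ‖v‖ * Real.sqrt (rho2 A xip p)}
      (suppF (Hset A xip) v) :=
  stmt13_general hm A xip hint v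
end
end
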